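/- Let k be a positive integer and let P : Fin k → ℝ be nonnegative reals sorted in non-decreasing order (P i ≤ P j whenever i ≤ j). Define S i = P i + 2 * ∑_{j < i} P j. Then ∑_{i} S i ≤ k * (∑_{i} P i). -/

import Mathlib

/-! Swapping the double sum, `∑ i ∑_{j<i} P j = ∑ j #{i > j} P j`, while monotonicity gives
`∑_{j<i} P j ≤ #{j < i} P i`. Adding the two expressions for the double sum, each `P i` gets weight
`#{j < i} + #{j > i} = k - 1`, so twice the double sum is at most `(k - 1) ∑ P`. -/

open Finset

namespace Finset

variable {α M : Type*} [Fintype α] [LinearOrder α] [LocallyFiniteOrderBot α]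
  [LocallyFiniteOrderTop α]

theorem card_Iio_add_card_Ioi_add_one (i : α) : #(Iio i) + #(Ioi i) + 1 = Fintype.card α := by
  classical
  have hsplit : Iio i ∪ Ioi i = univ.erase i := by ext j; simp
  have hdisj : Disjoint (Iio i) (Ioi i) :=
    disjoint_left.2 fun _ hlt hgt => lt_asymm (mem_Iio.1 hlt) (mem_Ioi.1 hgt)
  rw [← card_union_of_disjoint hdisj, hsplit, card_erase_add_one (mem_univ i), card_univ]

theorem sum_sum_Iio_eq_sum_card_Ioi_nsmul [AddCommMonoid M] (f : α → M) :
    ∑ i, ∑ j ∈ Iio i, f j = ∑ j, #(Ioi j) • f j := by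
  rw [sum_comm' (t' := univ) (s' := Ioi) (by simp)]
  simp only [sum_const]

theorem sum_add_two_nsmul_sum_Iio_le_card_nsmul [AddCommMonoid M] [PartialOrder M]
    [IsOrderedAddMonoid M] {f : α → M} (hf : Monotone f) :
    ∑ i, (f i + 2 • ∑ j ∈ Iio i, f j) ≤ Fintype.card α • ∑ i, f i := by
  have hbelow : ∑ i, ∑ j ∈ Iio i, f j ≤ ∑ i, #(Iio i) • f i :=
    sum_le_sum fun i _ => sum_le_card_nsmul _ _ _ fun j hj => hf (mem_Iio.1 hj).le
  calc ∑ i, (f i + 2 • ∑ j ∈ Iio i, f j)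
      = ∑ i, f i + (∑ i, ∑ j ∈ Iio i, f j + ∑ i, ∑ j ∈ Iio i, f j) := by
        rw [sum_add_distrib, ← smul_sum, two_nsmul]
    _ ≤ ∑ i, f i + (∑ i, #(Iio i) • f i + ∑ i, #(Ioi i) • f i) := by
        rw [← sum_sum_Iio_eq_sum_card_Ioi_nsmul]
        gcongr
    _ = ∑ i, (#(Iio i) + #(Ioi i) + 1) • f i := by
        simp only [add_nsmul, one_nsmul, sum_add_distrib]
        abel
    _ = Fintype.card α • ∑ i, f i := by
        simp only [card_Iio_add_card_Ioi_add_one, smul_sum]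

end Finset

theorem sum_shelled_le_general (k : ℕ) (P : Fin k → ℝ)
    (hmono : ∀ i j : Fin k, i ≤ j → P i ≤ P j) :
    ∑ i : Fin k, (P i + 2 * ∑ j ∈ Finset.Iio i, P j) ≤ (k : ℝ) * ∑ i : Fin k, P i := by
  simpa only [nsmul_eq_mul, Nat.cast_ofNat, Fintype.card_fin] using
    sum_add_two_nsmul_sum_Iio_le_card_nsmul (f := P) fun i j => hmono i j

theorem sum_shelled_le (k : ℕ) (hk : 0 < k) (P : Fin k → ℝ)
    (hnn : ∀ i, 0 ≤ P i) (hmono : ∀ i j : Fin k, i ≤ j → P i ≤ P j) :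
    ∑ i : Fin k, (P i + 2 * ∑ j ∈ Finset.Iio i, P j) ≤ (k : ℝ) * ∑ i : Fin k, P i :=
  sum_shelled_le_general k P hmono
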